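/- Let (𝒯, ℱ) be a torsion pair in the category mod gr Λ of finite-dimensional ℤⁿ-graded modules over a finite-dimensional ℤⁿ-graded algebra Λ, and let V ∈ 𝒯 be indecomposable and non-projective. Then V is Ext-projective in 𝒯 (i.e. Ext¹(V, −) vanishes on 𝒯) if and only if the Auslander–Reiten translate τ(V) in mod gr Λ lies in ℱ. -/
import Mathlib


open CategoryTheory CategoryTheory.Limits

universe v u

section

variable {C : Type u} [Category.{v} C] [Abelian C]

/-- `V` is Ext-projective in the full subcategory `T`:
`Ext¹(V, W) = 0` for all `W ∈ T`, i.e. every short exact sequence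
`0 → W → E → V → 0` with `W ∈ T` splits. -/
def ExtProjectiveIn (T : Set C) (V : C) : Prop :=
  ∀ W ∈ T, ∀ (E : C) (f : W ⟶ E) (g : E ⟶ V) (w : f ≫ g = 0),
    (ShortComplex.mk f g w).ShortExact → ∃ s : V ⟶ E, s ≫ g = 𝟙 V

/-- `0 → A → E → B → 0` is an almost split (Auslander–Reiten) sequence:
a non-split short exact sequence with `g` right almost split and `f` left almost
split. -/
structure IsAlmostSplitSequence {A E B : C} (f : A ⟶ E) (g : E ⟶ B) (w : f ≫ g = 0) :
    Prop where
  shortExact : (ShortComplex.mk f g w).ShortExact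
  nonSplit : ¬∃ s : B ⟶ E, s ≫ g = 𝟙 B
  rightAlmostSplit : ∀ (X : C) (h : X ⟶ B),
    (¬∃ s : B ⟶ X, s ≫ h = 𝟙 B) → ∃ h' : X ⟶ E, h' ≫ g = h
  leftAlmostSplit : ∀ (X : C) (h : A ⟶ X),
    (¬∃ s : X ⟶ A, h ≫ s = 𝟙 A) → ∃ h' : E ⟶ X, f ≫ h' = h

/-- An object is indecomposable if it is nonzero and its only idempotent
endomorphisms are `0` and `𝟙`. -/
def IsIndecomposableObj (V : C) : Prop :=
  ¬IsZero V ∧ ∀ e : V ⟶ V, e ≫ e = e → e = 0 ∨ e = 𝟙 V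

end

/-!
STATEMENT 5.  Let `(𝒯, ℱ)` be a torsion pair in `mod gr Λ` (a Hom-finite `k`-linear
abelian category with almost split sequences) and let `V ∈ 𝒯` be indecomposable and
non-projective.  Then `V` is Ext-projective in `𝒯` if and only if the Auslander–Reiten
translate `τV` (the left-hand term of the almost split sequence ending in `V`) lies
in `ℱ`.
-/
open scoped Pseudoelement in
theorem stmt5 {C : Type u} [Category.{v} C] [Abelian C]
    (k : Type) [Field k] [Linear k C]
    (hhomfin : ∀ X Y : C, FiniteDimensional k (X ⟶ Y))
    -- the torsion pair `(𝒯, ℱ)`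
    (T F : Set C)
    (hTF : ∀ t ∈ T, ∀ f ∈ F, ∀ φ : t ⟶ f, φ = 0)
    (hT : ∀ X : C, (∀ f ∈ F, ∀ φ : X ⟶ f, φ = 0) → X ∈ T)
    (hF : ∀ X : C, (∀ t ∈ T, ∀ φ : t ⟶ X, φ = 0) → X ∈ F)
    -- an indecomposable non-projective `V ∈ 𝒯`
    (V : C) (hV : V ∈ T) (hind : IsIndecomposableObj V) (hproj : ¬Projective V)
    -- the almost split sequence `0 → τV → E → V → 0` ending in `V`
    (τV E : C) (f : τV ⟶ E) (g : E ⟶ V) (w : f ≫ g = 0)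
    (hass : IsAlmostSplitSequence f g w) :
    ExtProjectiveIn T V ↔ τV ∈ F := by

  constructor
  · -- Ext-projectivity implies `τV ∈ F`.
    intro hEP
    haveI hmf' : Mono f := hass.shortExact.mono_f
    haveI hge : Epi g := hass.shortExact.epi_g
    apply hF
    intro W hW φ
    by_contra hφ
    -- factor `φ` through its image `I`
    have hfac : Abelian.factorThruImage φ ≫ Abelian.image.ι φ = φ := Abelian.image.fac φ
    set I := Abelian.image φ with hIdef
    set e := Abelian.factorThruImage φ with hedef
    set m := Abelian.image.ι φ with hmdef
    have hI : I ∈ T := by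
      apply hT
      intro f0 hf0 ψ
      have h0 : e ≫ ψ = 0 := hTF W hW f0 hf0 (e ≫ ψ)
      exact (cancel_epi e).1 (by rw [h0, comp_zero])
    -- the cokernel projection `p : τV → Q` admits no retraction
    have hp : ¬∃ s : cokernel m ⟶ τV, cokernel.π m ≫ s = 𝟙 τV := by
      rintro ⟨s, hs⟩
      apply hφ
      have hm0 : m = 0 := by
        calc m = m ≫ cokernel.π m ≫ s := by rw [hs, Category.comp_id]
        _ = (m ≫ cokernel.π m) ≫ s := by rw [Category.assoc]
        _ = 0 := by rw [cokernel.condition, zero_comp]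
      rw [← hfac, hm0, comp_zero]
    obtain ⟨h', hh'⟩ := hass.leftAlmostSplit (cokernel m) (cokernel.π m) hp
    -- build a short exact sequence `0 → I → ker h' → V → 0`
    set ι := kernel.ι h' with hιdef
    have hmf : (m ≫ f) ≫ h' = 0 := by rw [Category.assoc, hh', cokernel.condition]
    set κ : I ⟶ kernel h' := kernel.lift h' (m ≫ f) hmf with hκdef
    have hκι : κ ≫ ι = m ≫ f := kernel.lift_ι _ _ _
    have wX : κ ≫ (ι ≫ g) = 0 := by
      rw [← Category.assoc, hκι, Category.assoc, w, comp_zero]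
    have hmono : Mono κ := by
      have : Mono (κ ≫ ι) := by rw [hκι]; exact mono_comp _ _
      exact mono_of_mono κ ι
    have hepi : Epi (ι ≫ g) := by
      apply Abelian.Pseudoelement.epi_of_pseudo_surjective
      intro v
      obtain ⟨ε, hε⟩ := Abelian.Pseudoelement.pseudo_surjective_of_epi g v
      obtain ⟨t, ht⟩ := Abelian.Pseudoelement.pseudo_surjective_of_epi (cokernel.π m) (h' ε)
      have heq : h' ε = h' (f t) := by
        rw [← Abelian.Pseudoelement.comp_apply, hh', ht]
      obtain ⟨z, hz0, hz⟩ := Abelian.Pseudoelement.sub_of_eq_image h' ε (f t) heq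
      have hexk : (ShortComplex.mk ι h' (kernel.condition h')).Exact :=
        ShortComplex.exact_of_f_is_kernel _ (kernelIsKernel h')
      obtain ⟨x', hx'⟩ := Abelian.Pseudoelement.pseudo_exact_of_exact hexk z hz0
      refine ⟨x', ?_⟩
      rw [Abelian.Pseudoelement.comp_apply, hx']
      have hft : (g : E ⟶ V) (f t) = 0 := by
        rw [← Abelian.Pseudoelement.comp_apply, w]
        exact Abelian.Pseudoelement.zero_apply V t
      rw [hz V g hft, hε]
    have hex : (ShortComplex.mk κ (ι ≫ g) wX).Exact := by
      apply Abelian.Pseudoelement.exact_of_pseudo_exact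
      intro b hb
      have hgb : (g : E ⟶ V) (ι b) = 0 := by
        rw [← Abelian.Pseudoelement.comp_apply]; exact hb
      obtain ⟨a, ha⟩ := Abelian.Pseudoelement.pseudo_exact_of_exact
        hass.shortExact.exact (ι b) hgb
      have hpa : (cokernel.π m) a = 0 := by
        rw [← hh', Abelian.Pseudoelement.comp_apply, ha,
          ← Abelian.Pseudoelement.comp_apply, kernel.condition]
        exact Abelian.Pseudoelement.zero_apply _ b
      have hexm : (ShortComplex.mk m (cokernel.π m) (cokernel.condition m)).Exact :=
        ShortComplex.exact_of_g_is_cokernel _ (cokernelIsCokernel m)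
      obtain ⟨s, hs⟩ := Abelian.Pseudoelement.pseudo_exact_of_exact hexm a hpa
      refine ⟨s, Abelian.Pseudoelement.pseudo_injective_of_mono ι ?_⟩
      rw [← Abelian.Pseudoelement.comp_apply, hκι, Abelian.Pseudoelement.comp_apply, hs, ha]
    have hSE : (ShortComplex.mk κ (ι ≫ g) wX).ShortExact :=
      { exact := hex, mono_f := hmono, epi_g := hepi }
    obtain ⟨s, hs⟩ := hEP I hI (kernel h') κ (ι ≫ g) wX hSE
    exact hass.nonSplit ⟨s ≫ ι, by rw [Category.assoc]; exact hs⟩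
  · -- `τV ∈ F` implies Ext-projectivity.
    intro hFτ W hW E' f' g' w' hse
    haveI : Mono f := hass.shortExact.mono_f
    haveI : Epi g := hass.shortExact.epi_g
    haveI : Epi g' := hse.epi_g
    by_contra hns
    obtain ⟨h', hh'⟩ := hass.rightAlmostSplit E' g' hns
    have h0 : (f' ≫ h') ≫ g = 0 := by rw [Category.assoc, hh', w']
    obtain ⟨u, hu⟩ := KernelFork.IsLimit.lift' hass.shortExact.exact.fIsKernel (f' ≫ h') h0
    have huf : u ≫ f = f' ≫ h' := hu
    have hu0 : u = 0 := hTF W hW τV hFτ u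
    have hf'h' : f' ≫ h' = 0 := by rw [← huf, hu0, zero_comp]
    obtain ⟨v, hv⟩ := CokernelCofork.IsColimit.desc' hse.exact.gIsCokernel h' hf'h'
    have hgv : g' ≫ v = h' := hv
    have hcanc : g' ≫ (v ≫ g) = g' ≫ 𝟙 V := by
      rw [← Category.assoc, hgv, hh', Category.comp_id]
    exact hass.nonSplit ⟨v, (cancel_epi g').1 hcanc⟩
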